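/- Let V be a real M×N matrix of full column rank N, G(w) := Vᵀ·diag(w)·V, E(w) := −(1/N)·log(det G(w)) + Σᵢ wᵢ, K := {u ∈ ℝ^M : Vᵀ·diag(u)·V = 0}, π_K the Euclidean orthogonal projection onto K, and E_η(w) := E(w) + η·‖π_K w‖². Let S denote the set of minimizers of E over the nonnegative orthant and let ŵ* ∈ S be a point satisfying ‖π_K ŵ*‖² = min{‖π_K w‖² : w ∈ S}. If (η_n) is a strictly decreasing sequence of positive reals with η_n → 0 and w_n* is the (unique) minimizer of E_{η_n} over the nonnegative orthant, then the sequence (w_n*) converges to ŵ*. -/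

import Mathlib

/-!
The penalized minimizers `w n` satisfy `‖π_K (w n)‖² ≤ ‖π_K ŵ*‖²` and
`E (w n) ≤ E ŵ* + η n ‖π_K ŵ*‖²`, so they eventually lie in a sublevel set of `E` on the feasible
set; these are compact because `det G(w)` grows only like `‖w‖ ^ N` while `∑ wᵢ ≥ ‖w‖`.
Every cluster point is therefore a minimizer of `E` whose penalty is at most that of `ŵ*`, and
such a minimizer is unique: by strict concavity of `log det`, two minimizers have the same Gram
matrix, hence differ by an element of `K`, and their midpoint is again a minimizer, so strict
convexity of `‖·‖²` forces their projections onto `K` to agree.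
-/

open Matrix Filter Topology

theorem Real.log_div_two_lt_log_one_add_div_two {x : ℝ} (hx : 0 < x) (hx1 : x ≠ 1) :
    Real.log x / 2 < Real.log ((1 + x) / 2) := by
  have := strictConcaveOn_log_Ioi.2 (Set.mem_Ioi.2 one_pos) (Set.mem_Ioi.2 hx) hx1.symm
    (by norm_num : (0 : ℝ) < 2⁻¹) (by norm_num : (0 : ℝ) < 2⁻¹) (by norm_num)
  simp only [smul_eq_mul, Real.log_one, mul_zero, zero_add] at this
  rwa [div_eq_inv_mul, show (1 + x) / 2 = 2⁻¹ * 1 + 2⁻¹ * x by ring]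

namespace Matrix

variable {n : Type*} [Fintype n] [DecidableEq n]

theorem det_unitary_mul_mul_star (U : unitaryGroup n ℝ) (D : Matrix n n ℝ) :
    ((U : Matrix n n ℝ) * D * star (U : Matrix n n ℝ)).det = D.det := by
  rw [det_mul, det_mul, mul_right_comm, ← det_mul, Unitary.mul_star_self_of_mem U.2, det_one,
    one_mul]

theorem PosDef.log_det_div_two_lt_of_ne_one {S : Matrix n n ℝ} (hS : S.PosDef) (hS1 : S ≠ 1) :
    Real.log S.det / 2 < Real.log ((2⁻¹ : ℝ) • (1 + S)).det := by
  set μ := hS.1.eigenvalues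
  set U := hS.1.eigenvectorUnitary
  have hμ : ∀ i, 0 < μ i := hS.eigenvalues_pos
  have hUU : (U : Matrix n n ℝ) * star (U : Matrix n n ℝ) = 1 := Unitary.mul_star_self_of_mem U.2
  have hspec : S = U * diagonal μ * star (U : Matrix n n ℝ) := by
    simpa using hS.1.spectral_theorem
  have hmid : (2⁻¹ : ℝ) • (1 + S) =
      U * diagonal (fun i => (1 + μ i) / 2) * star (U : Matrix n n ℝ) := by
    have hdiag : diagonal (fun i => (1 + μ i) / 2) = (2⁻¹ : ℝ) • (1 + diagonal μ) := by
      ext i j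
      rcases eq_or_ne i j with rfl | hij
      · simp; ring
      · simp [hij]
    rw [hdiag, Matrix.mul_smul, Matrix.smul_mul, Matrix.mul_add, Matrix.add_mul, Matrix.mul_one,
      hUU, ← hspec]
  obtain ⟨i, hi⟩ : ∃ i, μ i ≠ 1 := by
    by_contra! h
    apply hS1
    rw [hspec, show μ = fun _ => 1 from funext h, diagonal_one, Matrix.mul_one, hUU]
  rw [hmid, hspec, det_unitary_mul_mul_star, det_unitary_mul_mul_star, det_diagonal, det_diagonal,
    Real.log_prod fun j _ => (hμ j).ne', Real.log_prod fun j _ => by have := hμ j; positivity,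
    Finset.sum_div]
  refine Finset.sum_lt_sum (fun j _ => ?_)
    ⟨i, Finset.mem_univ i, Real.log_div_two_lt_log_one_add_div_two (hμ i) hi⟩
  rcases eq_or_ne (μ j) 1 with hj | hj
  · simp [hj]
  · exact (Real.log_div_two_lt_log_one_add_div_two (hμ j) hj).le

open scoped MatrixOrder in
theorem PosDef.log_det_add_log_det_div_two_lt {A B : Matrix n n ℝ} (hA : A.PosDef) (hB : B.PosDef)
    (hAB : A ≠ B) :
    (Real.log A.det + Real.log B.det) / 2 < Real.log ((2⁻¹ : ℝ) • (A + B)).det := by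
  -- congruence by `A ^ (1 / 2)` reduces to the case `A = 1`
  set R := CFC.sqrt A
  have hRR : R * R = A := CFC.sqrt_mul_sqrt_self A hA.posSemidef.nonneg
  have hR : Rᴴ = R := (CFC.sqrt_nonneg A).posSemidef.1
  have hRd : IsUnit R.det := by
    rw [isUnit_iff_ne_zero]
    intro h
    simpa [← hRR, h] using hA.det_pos
  set S := R⁻¹ * B * R⁻¹
  have hS : S.PosDef := by
    have hRinv : star R⁻¹ = R⁻¹ := by rw [star_eq_conjTranspose, conjTranspose_nonsing_inv, hR]
    have hRinvu : IsUnit R⁻¹ := isUnit_nonsing_inv_iff.2 ((isUnit_iff_isUnit_det R).2 hRd)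
    simpa only [S, hRinv] using (IsUnit.posDef_star_left_conjugate_iff hRinvu).2 hB
  have hBS : B = R * S * R := by
    calc B = (R * R⁻¹) * B * (R⁻¹ * R) := by
          rw [mul_nonsing_inv R hRd, nonsing_inv_mul R hRd, Matrix.one_mul, Matrix.mul_one]
      _ = R * S * R := by simp only [S, Matrix.mul_assoc]
  have hlog (X : Matrix n n ℝ) (hX : 0 < X.det) :
      Real.log (R * X * R).det = Real.log A.det + Real.log X.det := by
    rw [← Real.log_mul hA.det_pos.ne' hX.ne', ← hRR, det_mul, det_mul, det_mul]
    ring_nf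
  have hmid : (2⁻¹ : ℝ) • (A + B) = R * ((2⁻¹ : ℝ) • (1 + S)) * R := by
    rw [Matrix.mul_smul, Matrix.smul_mul, Matrix.mul_add, Matrix.add_mul, Matrix.mul_one, hRR,
      ← hBS]
  have hS1 : S ≠ 1 := fun h => hAB (by rw [hBS, h, Matrix.mul_one, hRR])
  have hmidS : ((2⁻¹ : ℝ) • (1 + S)).PosDef := (PosDef.one.add hS).smul (by norm_num)
  rw [hmid, hlog _ hmidS.det_pos, hBS, hlog _ hS.det_pos]
  linarith [hS.log_det_div_two_lt_of_ne_one hS1]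

end Matrix

theorem eq_of_norm_sq_le_of_le_norm_midpoint_sq {F : Type*} [NormedAddCommGroup F]
    [InnerProductSpace ℝ F] {u v : F} (huv : ‖u‖ ^ 2 ≤ ‖v‖ ^ 2)
    (hv : ‖v‖ ^ 2 ≤ ‖(2⁻¹ : ℝ) • (u + v)‖ ^ 2) : u = v := by
  have hpar := parallelogram_law_with_norm ℝ u v
  rw [norm_smul, mul_pow, Real.norm_of_nonneg (by norm_num)] at hv
  rw [← sub_eq_zero, ← norm_eq_zero]
  nlinarith [norm_nonneg (u - v)]

theorem tendsto_of_isMinOn_add_mul {X : Type*} [TopologicalSpace X] [T2Space X]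
    {F : Set X} {E p : X → ℝ} {x₀ : X} {η : ℕ → ℝ} {w : ℕ → X}
    (hE : ∀ c, IsCompact {x ∈ F | E x ≤ c}) (hp : Continuous p) (hp0 : ∀ x, 0 ≤ p x)
    (hx₀ : x₀ ∈ F) (hx₀min : IsMinOn E F x₀)
    (huniq : ∀ x ∈ F, IsMinOn E F x → p x ≤ p x₀ → x = x₀)
    (hηpos : ∀ n, 0 < η n) (hη : Tendsto η atTop (𝓝 0))
    (hw : ∀ n, w n ∈ F) (hwmin : ∀ n, IsMinOn (fun x => E x + η n * p x) F (w n)) :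
    Tendsto w atTop (𝓝 x₀) := by
  have hcomp (n : ℕ) : E (w n) + η n * p (w n) ≤ E x₀ + η n * p x₀ := hwmin n hx₀
  have hp_le (n : ℕ) : p (w n) ≤ p x₀ :=
    le_of_mul_le_mul_left (by linarith [hcomp n, isMinOn_iff.1 hx₀min _ (hw n)]) (hηpos n)
  have hE_le (ε : ℝ) (hε : 0 < ε) : ∀ᶠ n in atTop, w n ∈ {x ∈ F | E x ≤ E x₀ + ε} := by
    have : ∀ᶠ n in atTop, η n * p x₀ < ε := by
      simpa using (hη.mul_const (p x₀)).eventually (gt_mem_nhds (by simpa using hε))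
    filter_upwards [this] with n hn
    exact ⟨hw n, by nlinarith [hcomp n, hp0 (w n), hηpos n]⟩
  refine (hE (E x₀ + 1)).tendsto_nhds_of_unique_mapClusterPt (hE_le 1 one_pos) ?_
  rintro x ⟨hxF, -⟩ hx
  have hEx : E x ≤ E x₀ := le_of_forall_pos_le_add fun ε hε =>
    ((hE (E x₀ + ε)).isClosed.mem_of_mapClusterPt hx (hE_le ε hε)).2
  have hpx : p x ≤ p x₀ :=
    (isClosed_le hp continuous_const).mem_of_mapClusterPt hx (Eventually.of_forall hp_le)
  exact huniq x hxF (fun y hy => hEx.trans (hx₀min hy)) hpx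

theorem exists_le_mul_norm_pow_of_homogeneous {E : Type*} [NormedAddCommGroup E]
    [NormedSpace ℝ E] [ProperSpace E] {f : E → ℝ} (hf : Continuous f) {n : ℕ}
    (hhom : ∀ (c : ℝ) x, f (c • x) = c ^ n * f x) : ∃ C, ∀ x, f x ≤ C * ‖x‖ ^ n := by
  obtain ⟨C, hC⟩ := (isCompact_sphere (0 : E) 1).exists_bound_of_continuousOn hf.continuousOn
  -- the term `f 0` only matters when `n = 0`
  refine ⟨max C (f 0), fun x => ?_⟩
  rcases eq_or_ne x 0 with rfl | hx
  · calc f 0 = 0 ^ n * f 0 := by simpa using hhom 0 (0 : E)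
      _ ≤ 0 ^ n * max C (f 0) := by gcongr; exact le_max_right _ _
      _ = max C (f 0) * ‖(0 : E)‖ ^ n := by rw [norm_zero, mul_comm]
  · have hx' : ‖x‖ ≠ 0 := norm_ne_zero_iff.2 hx
    have hu : ‖x‖⁻¹ • x ∈ Metric.sphere (0 : E) 1 := by
      simp [norm_smul, hx']
    calc f x = ‖x‖ ^ n * f (‖x‖⁻¹ • x) := by rw [← hhom, smul_inv_smul₀ hx']
      _ ≤ ‖x‖ ^ n * max C (f 0) := by
          gcongr
          exact (le_abs_self _).trans ((hC _ hu).trans (le_max_left _ _))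
      _ = max C (f 0) * ‖x‖ ^ n := mul_comm _ _

theorem EuclideanSpace.norm_le_sum_of_nonneg {ι : Type*} [Fintype ι]
    (x : EuclideanSpace ℝ ι) (hx : ∀ i, 0 ≤ x i) : ‖x‖ ≤ ∑ i, x i := by
  refine le_of_sq_le_sq ?_ (Finset.sum_nonneg fun i _ => hx i)
  rw [EuclideanSpace.real_norm_sq_eq]
  exact Finset.sum_sq_le_sq_sum_of_nonneg fun i _ => hx i

theorem EuclideanSpace.sum_inv_two_smul_add {ι : Type*} [Fintype ι]
    (a b : EuclideanSpace ℝ ι) :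
    ∑ i, ((2⁻¹ : ℝ) • (a + b)) i = (∑ i, a i + ∑ i, b i) / 2 := by
  simp only [PiLp.smul_apply, PiLp.add_apply, smul_eq_mul, ← Finset.mul_sum,
    Finset.sum_add_distrib]
  ring

section OptimalDesign

variable {M N : ℕ} (V : Matrix (Fin M) (Fin N) ℝ)

def weightedGram : EuclideanSpace ℝ (Fin M) →ₗ[ℝ] Matrix (Fin N) (Fin N) ℝ where
  toFun w := Vᵀ * diagonal w * V
  map_add' u v := by rw [WithLp.ofLp_add, ← Matrix.add_mul, ← Matrix.mul_add, diagonal_add]; rfl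
  map_smul' c u := by simp

noncomputable def designEnergy (w : EuclideanSpace ℝ (Fin M)) : ℝ :=
  -(1 / (N : ℝ)) * Real.log (weightedGram V w).det + ∑ i, w i

def feasibleWeights : Set (EuclideanSpace ℝ (Fin M)) :=
  {w | (∀ i, 0 ≤ w i) ∧ 0 < (weightedGram V w).det}

theorem continuous_det_weightedGram : Continuous fun w => (weightedGram V w).det :=
  (LinearMap.continuous_of_finiteDimensional _).matrix_det

theorem weightedGram_posDef {w : EuclideanSpace ℝ (Fin M)} (hw : w ∈ feasibleWeights V) :
    (weightedGram V w).PosDef := by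
  have hD : (diagonal w.ofLp).PosSemidef := posSemidef_diagonal_iff.2 hw.1
  have := hD.conjTranspose_mul_mul_same V
  rw [conjTranspose_eq_transpose_of_trivial] at this
  exact this.posDef_iff_det_ne_zero.2 hw.2.ne'

theorem exists_det_weightedGram_le : ∃ C, ∀ w, (weightedGram V w).det ≤ C * ‖w‖ ^ N := by
  refine exists_le_mul_norm_pow_of_homogeneous (continuous_det_weightedGram V) fun c w => ?_
  rw [map_smul, det_smul, Fintype.card_fin]

theorem isBounded_designEnergy_sublevel (hN : 0 < N) (c : ℝ) :
    Bornology.IsBounded {w ∈ feasibleWeights V | designEnergy V w ≤ c} := by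
  obtain ⟨C, hC⟩ := exists_det_weightedGram_le V
  refine (Metric.isBounded_closedBall (x := 0) (r := 2 * (c + Real.log C / N))).subset ?_
  rintro w ⟨⟨hw0, hdet⟩, hE⟩
  rw [Metric.mem_closedBall, dist_zero_right]
  have hpos : 0 < C * ‖w‖ ^ N := hdet.trans_le (hC w)
  have hw : 0 < ‖w‖ := (norm_nonneg w).lt_of_ne'
    ((pow_ne_zero_iff hN.ne').1 (right_ne_zero_of_mul hpos.ne'))
  have hlog : Real.log (weightedGram V w).det ≤ Real.log C + N * Real.log ‖w‖ := by
    rw [← Real.log_pow, ← Real.log_mul (left_ne_zero_of_mul hpos.ne') (pow_pos hw N).ne']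
    exact Real.log_le_log hdet (hC w)
  have hlog_le : Real.log ‖w‖ ≤ ‖w‖ / 2 := by
    have h2 := Real.log_le_sub_one_of_pos (half_pos hw)
    rw [Real.log_div hw.ne' two_ne_zero] at h2
    linarith [Real.log_two_lt_d9]
  have hsum := EuclideanSpace.norm_le_sum_of_nonneg w hw0
  have hN' : (0 : ℝ) < N := by exact_mod_cast hN
  have hdiv : Real.log (weightedGram V w).det / N ≤ Real.log C / N + Real.log ‖w‖ := by
    rw [div_le_iff₀ hN', add_mul, div_mul_cancel₀ _ hN'.ne']
    linarith
  rw [designEnergy, neg_mul, one_div_mul_eq_div] at hE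
  linarith

theorem exp_le_det_weightedGram (hN : 0 < N) {c : ℝ} {w : EuclideanSpace ℝ (Fin M)}
    (hw : w ∈ feasibleWeights V) (hE : designEnergy V w ≤ c) :
    Real.exp (-(N * c)) ≤ (weightedGram V w).det := by
  have hsum : 0 ≤ ∑ i, w i := Finset.sum_nonneg fun i _ => hw.1 i
  have hN' : (0 : ℝ) < N := by exact_mod_cast hN
  rw [← Real.exp_log hw.2, Real.exp_le_exp, neg_le, ← div_le_iff₀' hN', neg_div]
  rw [designEnergy, neg_mul, one_div_mul_eq_div] at hE
  linarith

theorem isClosed_designEnergy_sublevel (hN : 0 < N) (c : ℝ) :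
    IsClosed {w ∈ feasibleWeights V | designEnergy V w ≤ c} := by
  have hset : {w ∈ feasibleWeights V | designEnergy V w ≤ c} =
      ({w | ∀ i, 0 ≤ w i} ∩ {w | Real.exp (-(N * c)) ≤ (weightedGram V w).det}) ∩
        designEnergy V ⁻¹' Set.Iic c := by
    ext w
    constructor
    · rintro ⟨hw, hE⟩
      exact ⟨⟨hw.1, exp_le_det_weightedGram V hN hw hE⟩, hE⟩
    · rintro ⟨⟨hw0, hdet⟩, hE⟩
      exact ⟨⟨hw0, (Real.exp_pos _).trans_le hdet⟩, hE⟩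
  rw [hset]
  refine ContinuousOn.preimage_isClosed_of_isClosed (fun w hw => ?_) ?_ isClosed_Iic
  · have hdet : (weightedGram V w).det ≠ 0 := ((Real.exp_pos _).trans_le hw.2).ne'
    exact ((((continuous_det_weightedGram V).continuousAt.log hdet).const_mul _).add
      (by fun_prop : Continuous fun w : EuclideanSpace ℝ (Fin M) => ∑ i, w i).continuousAt
      ).continuousWithinAt
  · refine IsClosed.inter ?_ (isClosed_le continuous_const (continuous_det_weightedGram V))
    simp only [Set.ofPred_forall]
    exact isClosed_iInter fun i => isClosed_le continuous_const (by fun_prop)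

theorem isCompact_designEnergy_sublevel (hN : 0 < N) (c : ℝ) :
    IsCompact {w ∈ feasibleWeights V | designEnergy V w ≤ c} :=
  Metric.isCompact_of_isClosed_isBounded (isClosed_designEnergy_sublevel V hN c)
    (isBounded_designEnergy_sublevel V hN c)

theorem midpoint_mem_feasibleWeights {a b : EuclideanSpace ℝ (Fin M)}
    (ha : a ∈ feasibleWeights V) (hb : b ∈ feasibleWeights V) :
    (2⁻¹ : ℝ) • (a + b) ∈ feasibleWeights V := by
  refine ⟨fun i => ?_, ?_⟩
  · have := ha.1 i
    have := hb.1 i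
    simp only [PiLp.smul_apply, PiLp.add_apply, smul_eq_mul]
    positivity
  · rw [map_smul, map_add]
    exact (((weightedGram_posDef V ha).add (weightedGram_posDef V hb)).smul
      (by norm_num : (0 : ℝ) < 2⁻¹)).det_pos

theorem designEnergy_midpoint_lt (hN : 0 < N) {a b : EuclideanSpace ℝ (Fin M)}
    (ha : a ∈ feasibleWeights V) (hb : b ∈ feasibleWeights V)
    (hab : weightedGram V a ≠ weightedGram V b) :
    designEnergy V ((2⁻¹ : ℝ) • (a + b)) < (designEnergy V a + designEnergy V b) / 2 := by
  have hlog :=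
    (weightedGram_posDef V ha).log_det_add_log_det_div_two_lt (weightedGram_posDef V hb) hab
  have hN' : 0 < 1 / (N : ℝ) := by positivity
  simp only [designEnergy, map_smul, map_add, EuclideanSpace.sum_inv_two_smul_add]
  nlinarith

theorem designEnergy_midpoint_of_weightedGram_eq {a b : EuclideanSpace ℝ (Fin M)}
    (hab : weightedGram V a = weightedGram V b) :
    designEnergy V ((2⁻¹ : ℝ) • (a + b)) = (designEnergy V a + designEnergy V b) / 2 := by
  simp only [designEnergy, map_smul, map_add, EuclideanSpace.sum_inv_two_smul_add, ← hab,
    ← two_smul ℝ, smul_smul]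
  norm_num
  ring

theorem weightedGram_eq_of_isMinOn (hN : 0 < N) {a b : EuclideanSpace ℝ (Fin M)}
    (ha : a ∈ feasibleWeights V) (hb : b ∈ feasibleWeights V)
    (hamin : IsMinOn (designEnergy V) (feasibleWeights V) a)
    (hbmin : IsMinOn (designEnergy V) (feasibleWeights V) b) :
    weightedGram V a = weightedGram V b := by
  by_contra hab
  linarith [isMinOn_iff.1 hamin _ hb, isMinOn_iff.1 hbmin _ ha,
    isMinOn_iff.1 hamin _ (midpoint_mem_feasibleWeights V ha hb),
    designEnergy_midpoint_lt V hN ha hb hab]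

theorem eq_of_isMinOn_designEnergy (hN : 0 < N) {a b : EuclideanSpace ℝ (Fin M)}
    (ha : a ∈ feasibleWeights V) (hb : b ∈ feasibleWeights V)
    (hamin : IsMinOn (designEnergy V) (feasibleWeights V) a)
    (hbmin : IsMinOn (designEnergy V) (feasibleWeights V) b)
    (hab : ‖(LinearMap.ker (weightedGram V)).starProjection a‖ ^ 2 ≤
      ‖(LinearMap.ker (weightedGram V)).starProjection b‖ ^ 2)
    (hb_le : ∀ v ∈ feasibleWeights V, IsMinOn (designEnergy V) (feasibleWeights V) v →
      ‖(LinearMap.ker (weightedGram V)).starProjection b‖ ^ 2 ≤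
        ‖(LinearMap.ker (weightedGram V)).starProjection v‖ ^ 2) :
    a = b := by
  set K := LinearMap.ker (weightedGram V)
  have hG := weightedGram_eq_of_isMinOn V hN ha hb hamin hbmin
  have hm := midpoint_mem_feasibleWeights V ha hb
  have hmmin : IsMinOn (designEnergy V) (feasibleWeights V) ((2⁻¹ : ℝ) • (a + b)) :=
    isMinOn_iff.2 fun v hv => by
      rw [designEnergy_midpoint_of_weightedGram_eq V hG]
      linarith [isMinOn_iff.1 hamin v hv, isMinOn_iff.1 hbmin v hv]
  have hproj : K.starProjection a = K.starProjection b :=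
    eq_of_norm_sq_le_of_le_norm_midpoint_sq hab (by simpa using hb_le _ hm hmmin)
  have hK : a - b ∈ K := by rw [LinearMap.mem_ker, map_sub, hG, sub_self]
  rw [← sub_eq_zero, ← K.starProjection_eq_self_iff.2 hK, map_sub, hproj, sub_self]

end OptimalDesign

theorem stmt_11_general (M N : ℕ) (hN : 0 < N)
    (V : Matrix (Fin M) (Fin N) ℝ)
    (G : (Fin M → ℝ) → Matrix (Fin N) (Fin N) ℝ)
    (hG : ∀ w, G w = Vᵀ * diagonal w * V)
    (E : EuclideanSpace ℝ (Fin M) → ℝ)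
    (hE : ∀ w, E w = -(1 / (N : ℝ)) * Real.log (G (fun i => w i)).det + ∑ i, w i)
    (K : Submodule ℝ (EuclideanSpace ℝ (Fin M)))
    (hK : ∀ u : EuclideanSpace ℝ (Fin M), u ∈ K ↔ Vᵀ * diagonal (fun i => u i) * V = 0)
    (Eη : ℝ → EuclideanSpace ℝ (Fin M) → ℝ)
    (hEη : ∀ η w, Eη η w =
      E w + η * ‖(K.orthogonalProjectionOnto w : EuclideanSpace ℝ (Fin M))‖ ^ 2)
    -- ŵ* : a minimizer of E over the nonnegative orthant with minimal ‖π_K ·‖²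
    (what : EuclideanSpace ℝ (Fin M))
    (hwhatmem : what ∈ {w : EuclideanSpace ℝ (Fin M) |
      (∀ i, 0 ≤ w i) ∧ 0 < (G (fun i => w i)).det})
    (hwhatmin : IsMinOn E {w : EuclideanSpace ℝ (Fin M) |
      (∀ i, 0 ≤ w i) ∧ 0 < (G (fun i => w i)).det} what)
    (hwhatproj : ∀ v ∈ {w : EuclideanSpace ℝ (Fin M) |
        (∀ i, 0 ≤ w i) ∧ 0 < (G (fun i => w i)).det},
      IsMinOn E {w : EuclideanSpace ℝ (Fin M) |
        (∀ i, 0 ≤ w i) ∧ 0 < (G (fun i => w i)).det} v →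
      ‖(K.orthogonalProjectionOnto what : EuclideanSpace ℝ (Fin M))‖ ^ 2 ≤
        ‖(K.orthogonalProjectionOnto v : EuclideanSpace ℝ (Fin M))‖ ^ 2)
    -- the sequence of regularization parameters
    (η : ℕ → ℝ) (hηpos : ∀ n, 0 < η n)
    (hηlim : Tendsto η atTop (nhds 0))
    -- the minimizers of the regularized energies
    (w : ℕ → EuclideanSpace ℝ (Fin M))
    (hwmem : ∀ n, w n ∈ {v : EuclideanSpace ℝ (Fin M) |
      (∀ i, 0 ≤ v i) ∧ 0 < (G (fun i => v i)).det})
    (hwmin : ∀ n, IsMinOn (Eη (η n)) {v : EuclideanSpace ℝ (Fin M) |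
      (∀ i, 0 ≤ v i) ∧ 0 < (G (fun i => v i)).det} (w n)) :
    Tendsto w atTop (nhds what) := by
  obtain rfl : E = designEnergy V := funext fun v => by rw [hE, hG]; rfl
  obtain rfl : K = LinearMap.ker (weightedGram V) := by
    ext u
    rw [hK, LinearMap.mem_ker]
    rfl
  obtain rfl : Eη = fun η v =>
      designEnergy V v + η * ‖(LinearMap.ker (weightedGram V)).starProjection v‖ ^ 2 :=
    funext₂ hEη
  have hF : {v : EuclideanSpace ℝ (Fin M) | (∀ i, 0 ≤ v i) ∧ 0 < (G fun i => v i).det} =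
      feasibleWeights V := by
    ext v
    simp only [hG]
    rfl
  rw [hF] at hwhatmem hwhatmin hwhatproj hwmem hwmin
  exact tendsto_of_isMinOn_add_mul (isCompact_designEnergy_sublevel V hN) (by fun_prop)
    (fun _ => sq_nonneg _) hwhatmem hwhatmin
    (fun x hx hxmin hxp =>
      eq_of_isMinOn_designEnergy V hN hx hwhatmem hxmin hwhatmin hxp hwhatproj)
    hηpos hηlim hwmem hwmin

theorem stmt_11 (M N : ℕ) (hN : 0 < N) (hMN : N ≤ M)
    (V : Matrix (Fin M) (Fin N) ℝ) (hV : V.rank = N)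
    (G : (Fin M → ℝ) → Matrix (Fin N) (Fin N) ℝ)
    (hG : ∀ w, G w = Vᵀ * diagonal w * V)
    (E : EuclideanSpace ℝ (Fin M) → ℝ)
    (hE : ∀ w, E w = -(1 / (N : ℝ)) * Real.log (G (fun i => w i)).det + ∑ i, w i)
    (K : Submodule ℝ (EuclideanSpace ℝ (Fin M)))
    (hK : ∀ u : EuclideanSpace ℝ (Fin M), u ∈ K ↔ Vᵀ * diagonal (fun i => u i) * V = 0)
    (Eη : ℝ → EuclideanSpace ℝ (Fin M) → ℝ)
    (hEη : ∀ η w, Eη η w =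
      E w + η * ‖(K.orthogonalProjectionOnto w : EuclideanSpace ℝ (Fin M))‖ ^ 2)
    -- ŵ* : a minimizer of E over the nonnegative orthant with minimal ‖π_K ·‖²
    (what : EuclideanSpace ℝ (Fin M))
    (hwhatmem : what ∈ {w : EuclideanSpace ℝ (Fin M) |
      (∀ i, 0 ≤ w i) ∧ 0 < (G (fun i => w i)).det})
    (hwhatmin : IsMinOn E {w : EuclideanSpace ℝ (Fin M) |
      (∀ i, 0 ≤ w i) ∧ 0 < (G (fun i => w i)).det} what)
    (hwhatproj : ∀ v ∈ {w : EuclideanSpace ℝ (Fin M) |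
        (∀ i, 0 ≤ w i) ∧ 0 < (G (fun i => w i)).det},
      IsMinOn E {w : EuclideanSpace ℝ (Fin M) |
        (∀ i, 0 ≤ w i) ∧ 0 < (G (fun i => w i)).det} v →
      ‖(K.orthogonalProjectionOnto what : EuclideanSpace ℝ (Fin M))‖ ^ 2 ≤
        ‖(K.orthogonalProjectionOnto v : EuclideanSpace ℝ (Fin M))‖ ^ 2)
    -- the sequence of regularization parameters
    (η : ℕ → ℝ) (hηpos : ∀ n, 0 < η n) (hηanti : StrictAnti η)
    (hηlim : Tendsto η atTop (nhds 0))
    -- the minimizers of the regularized energies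
    (w : ℕ → EuclideanSpace ℝ (Fin M))
    (hwmem : ∀ n, w n ∈ {v : EuclideanSpace ℝ (Fin M) |
      (∀ i, 0 ≤ v i) ∧ 0 < (G (fun i => v i)).det})
    (hwmin : ∀ n, IsMinOn (Eη (η n)) {v : EuclideanSpace ℝ (Fin M) |
      (∀ i, 0 ≤ v i) ∧ 0 < (G (fun i => v i)).det} (w n)) :
    Tendsto w atTop (nhds what) :=
  stmt_11_general M N hN V G hG E hE K hK Eη hEη what hwhatmem hwhatmin hwhatproj η hηpos hηlim w
    hwmem hwmin
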